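/- arXiv:2209.00770 — 5 statements merged into one kernel-verified Lean document; each statement's English description precedes it below -/
import Mathlib

section
/- Let X be a constitutive tensor on a 3-dimensional Minkowski space and for a covector q define Y^{ab}(q) = X^{ambn} q_m q_n. Then the homogeneous quartic polynomial Y^{k}{}_{l}(q) Y^{l}{}_{k}(q) − (Y^{k}{}_{k}(q))^2 factorizes as a product of two homogeneous quadratic polynomials in q; explicitly, Y^{k}{}_{l}(q) Y^{l}{}_{k}(q) − (Y^{k}{}_{k}(q))^2 = (η^{kl} q_k q_l) · [ (X⋆)^{i}{}_{mn} (⋆X)^{mn}{}_{j} q_i q^j ], where all indices are raised and lowered with η. -/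
open scoped BigOperators

noncomputable section

/-- The Minkowski metric on ℝ³ with matrix diag(−1,1,1).  Since its inverse is
equal to itself, the same function is used for raising and lowering indices. -/
def η (a b : Fin 3) : ℝ :=
  if a = b then (if a = 0 then -1 else 1) else 0

/-- The totally antisymmetric symbol [abc] with [012] = +1; these are the lower
components ε_{abc} of the Levi-Civita tensor. -/
def εLow (a b c : Fin 3) : ℝ :=
  (((b : ℕ) : ℝ) - ((a : ℕ) : ℝ)) * (((c : ℕ) : ℝ) - ((b : ℕ) : ℝ)) *
    (((c : ℕ) : ℝ) - ((a : ℕ) : ℝ)) / 2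

/-- The upper components of the Levi-Civita tensor: ε^{abc} = −[abc]. -/
def εUp (a b c : Fin 3) : ℝ := -εLow a b c

/-- The mixed Levi-Civita tensor ε^{pq}{}_c, obtained by raising the first two
indices of ε_{abc} with η. -/
def εMix (p q c : Fin 3) : ℝ := ∑ a, ∑ b, η p a * η q b * εLow a b c

/-- A constitutive tensor: X_{abcd} = −X_{bacd} = −X_{abdc}. -/
def IsConstitutive (X : Fin 3 → Fin 3 → Fin 3 → Fin 3 → ℝ) : Prop :=
  (∀ a b c d, X a b c d = -X b a c d) ∧ (∀ a b c d, X a b c d = -X a b d c)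

/-- Right Hodge dual: (X⋆)_{abc} = ½ X_{abpq} ε^{pq}{}_c. -/
def rightDual (X : Fin 3 → Fin 3 → Fin 3 → Fin 3 → ℝ) (a b c : Fin 3) : ℝ :=
  (1/2) * ∑ p, ∑ q, X a b p q * εMix p q c

/-- Left Hodge dual: (⋆X)_{abc} = ½ ε^{pq}{}_a X_{pqbc}. -/
def leftDual (X : Fin 3 → Fin 3 → Fin 3 → Fin 3 → ℝ) (a b c : Fin 3) : ℝ :=
  (1/2) * ∑ p, ∑ q, εMix p q a * X p q b c

/-- Double Hodge dual: (⋆X⋆)_{ab} = ¼ ε^{pq}{}_a ε^{rs}{}_b X_{pqrs}. -/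
def doubleDual (X : Fin 3 → Fin 3 → Fin 3 → Fin 3 → ℝ) (a b : Fin 3) : ℝ :=
  (1/4) * ∑ p, ∑ q, ∑ r, ∑ s, εMix p q a * εMix r s b * X p q r s

/-- Raise both indices of a rank-2 tensor. -/
def raise12of2 (T : Fin 3 → Fin 3 → ℝ) (a b : Fin 3) : ℝ :=
  ∑ x, ∑ y, η a x * η b y * T x y

/-- Raise the first index of a rank-3 tensor. -/
def raise1of3 (T : Fin 3 → Fin 3 → Fin 3 → ℝ) (a b c : Fin 3) : ℝ :=
  ∑ x, η a x * T x b c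

/-- Raise the first two indices of a rank-3 tensor. -/
def raise12of3 (T : Fin 3 → Fin 3 → Fin 3 → ℝ) (a b c : Fin 3) : ℝ :=
  ∑ x, ∑ y, η a x * η b y * T x y c

/-- Raise all three indices of a rank-3 tensor. -/
def raise123of3 (T : Fin 3 → Fin 3 → Fin 3 → ℝ) (a b c : Fin 3) : ℝ :=
  ∑ x, ∑ y, ∑ z, η a x * η b y * η c z * T x y z

/-- Raise the first index of a rank-4 tensor. -/
def raise1of4 (X : Fin 3 → Fin 3 → Fin 3 → Fin 3 → ℝ) (a b c d : Fin 3) : ℝ :=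
  ∑ x, η a x * X x b c d

/-- Raise the first two indices of a rank-4 tensor. -/
def raise12of4 (X : Fin 3 → Fin 3 → Fin 3 → Fin 3 → ℝ) (a b c d : Fin 3) : ℝ :=
  ∑ x, ∑ y, η a x * η b y * X x y c d

/-- Raise the first three indices of a rank-4 tensor. -/
def raise123of4 (X : Fin 3 → Fin 3 → Fin 3 → Fin 3 → ℝ) (a b c d : Fin 3) : ℝ :=
  ∑ x, ∑ y, ∑ z, η a x * η b y * η c z * X x y z d

/-- Raise all four indices of a rank-4 tensor: X^{abcd}. -/
def raise1234of4 (X : Fin 3 → Fin 3 → Fin 3 → Fin 3 → ℝ) (a b c d : Fin 3) : ℝ :=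
  ∑ x, ∑ y, ∑ z, ∑ w, η a x * η b y * η c z * η d w * X x y z w

/-- The mixed contracted trace X^{i}{}_{j} = X^{ik}{}_{jk}. -/
def mixTrace (X : Fin 3 → Fin 3 → Fin 3 → Fin 3 → ℝ) (i j : Fin 3) : ℝ :=
  ∑ k, raise12of4 X i k j k

/-- The scalar trace X = X^{k}{}_{k}. -/
def scalarX (X : Fin 3 → Fin 3 → Fin 3 → Fin 3 → ℝ) : ℝ :=
  ∑ k, mixTrace X k k

/-- Y^{ab}(q) = X^{ambn} q_m q_n. -/
def Ymap (X : Fin 3 → Fin 3 → Fin 3 → Fin 3 → ℝ) (q : Fin 3 → ℝ) (a b : Fin 3) : ℝ :=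
  ∑ m, ∑ n, raise1234of4 X a m b n * q m * q n

/-- The mixed form Y^{k}{}_{l}(q) = Y^{kb}(q) η_{bl}. -/
def Ymix (X : Fin 3 → Fin 3 → Fin 3 → Fin 3 → ℝ) (q : Fin 3 → ℝ) (k l : Fin 3) : ℝ :=
  ∑ b, Ymap X q k b * η b l

/-- Auxiliary contraction (X⋆)^i_{mn} (⋆X)^{mn}_j. -/
def Dten (X : Fin 3 → Fin 3 → Fin 3 → Fin 3 → ℝ) (i j : Fin 3) : ℝ :=
  ∑ m, ∑ n, raise1of3 (rightDual X) i m n * raise12of3 (leftDual X) m n j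

set_option maxHeartbeats 1000000 in
lemma raise4_diag (X : Fin 3 → Fin 3 → Fin 3 → Fin 3 → ℝ) (a b c d : Fin 3) :
    raise1234of4 X a b c d = η a a * η b b * η c c * η d d * X a b c d := by
  fin_cases a <;> fin_cases b <;> fin_cases c <;> fin_cases d <;>
    simp [raise1234of4, η, Fin.sum_univ_three]

set_option maxHeartbeats 1000000 in
lemma εMix_diag (p q c : Fin 3) : εMix p q c = η p p * η q q * εLow p q c := by
  fin_cases p <;> fin_cases q <;> fin_cases c <;>
    simp [εMix, η, εLow, Fin.sum_univ_three] <;> norm_num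

set_option maxHeartbeats 2000000 in
/-- the quartic Y^{k}{}_{l} Y^{l}{}_{k} − (Y^{k}{}_{k})² factorizes as
(η^{kl} q_k q_l) · [ (X⋆)^{i}{}_{mn} (⋆X)^{mn}{}_{j} q_i q^j ]. -/
theorem fresnel_quartic_factorizes
    (X : Fin 3 → Fin 3 → Fin 3 → Fin 3 → ℝ) (hX : IsConstitutive X)
    (q : Fin 3 → ℝ) :
    (∑ k, ∑ l, Ymix X q k l * Ymix X q l k) - (∑ k, Ymix X q k k) ^ 2 =
      (∑ k, ∑ l, η k l * q k * q l) *
        (∑ i, ∑ j,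
          (∑ m, ∑ n, raise1of3 (rightDual X) i m n * raise12of3 (leftDual X) m n j) *
            q i * (∑ j', η j j' * q j')) := by

  obtain ⟨h1, h2⟩ := hX
  have z1 : ∀ a c d, X a a c d = 0 := fun a c d => by have := h1 a a c d; linarith
  have z2 : ∀ a b c, X a b c c = 0 := fun a b c => by have := h2 a b c c; linarith
  have e10 : ∀ c d, X 1 0 c d = -X 0 1 c d := fun c d => h1 1 0 c d
  have e20 : ∀ c d, X 2 0 c d = -X 0 2 c d := fun c d => h1 2 0 c d
  have e21 : ∀ c d, X 2 1 c d = -X 1 2 c d := fun c d => h1 2 1 c d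
  have f10 : ∀ a b, X a b 1 0 = -X a b 0 1 := fun a b => h2 a b 1 0
  have f20 : ∀ a b, X a b 2 0 = -X a b 0 2 := fun a b => h2 a b 2 0
  have f21 : ∀ a b, X a b 2 1 = -X a b 1 2 := fun a b => h2 a b 2 1
  have hrd0 : ∀ a b, rightDual X a b 0 = X a b 1 2 := fun a b => by
    simp only [rightDual, εMix_diag, η, εLow, Fin.reduceEq, reduceIte, Fin.sum_univ_three]
    norm_num
    linarith [f21 a b]
  have hrd1 : ∀ a b, rightDual X a b 1 = X a b 0 2 := fun a b => by
    simp only [rightDual, εMix_diag, η, εLow, Fin.reduceEq, reduceIte, Fin.sum_univ_three]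
    norm_num
    linarith [f20 a b]
  have hrd2 : ∀ a b, rightDual X a b 2 = -X a b 0 1 := fun a b => by
    simp only [rightDual, εMix_diag, η, εLow, Fin.reduceEq, reduceIte, Fin.sum_univ_three]
    norm_num
    linarith [f10 a b]
  have hld0 : ∀ b c, leftDual X 0 b c = X 1 2 b c := fun b c => by
    simp only [leftDual, εMix_diag, η, εLow, Fin.reduceEq, reduceIte, Fin.sum_univ_three]
    norm_num
    linarith [e21 b c]
  have hld1 : ∀ b c, leftDual X 1 b c = X 0 2 b c := fun b c => by
    simp only [leftDual, εMix_diag, η, εLow, Fin.reduceEq, reduceIte, Fin.sum_univ_three]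
    norm_num
    linarith [e20 b c]
  have hld2 : ∀ b c, leftDual X 2 b c = -X 0 1 b c := fun b c => by
    simp only [leftDual, εMix_diag, η, εLow, Fin.reduceEq, reduceIte, Fin.sum_univ_three]
    norm_num
    linarith [e10 b c]
  have hY00 : Ymix X q 0 0 = -(X 0 1 0 1)*(q 1)^2 - (X 0 1 0 2)*(q 1)*(q 2) - (X 0 2 0 1)*(q 1)*(q 2) - (X 0 2 0 2)*(q 2)^2 := by
    simp only [Ymix, Ymap, raise4_diag, Fin.sum_univ_three, η, Fin.reduceEq, reduceIte]
    norm_num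
    simp only [z1, z2, e10, e20, e21, f10, f20, f21]
    ring
  have hY01 : Ymix X q 0 1 = -(X 0 1 0 1)*(q 0)*(q 1) - (X 0 1 1 2)*(q 1)*(q 2) - (X 0 2 0 1)*(q 0)*(q 2) - (X 0 2 1 2)*(q 2)^2 := by
    simp only [Ymix, Ymap, raise4_diag, Fin.sum_univ_three, η, Fin.reduceEq, reduceIte]
    norm_num
    simp only [z1, z2, e10, e20, e21, f10, f20, f21]
    ring
  have hY02 : Ymix X q 0 2 = -(X 0 1 0 2)*(q 0)*(q 1) + (X 0 1 1 2)*(q 1)^2 - (X 0 2 0 2)*(q 0)*(q 2) + (X 0 2 1 2)*(q 1)*(q 2) := by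
    simp only [Ymix, Ymap, raise4_diag, Fin.sum_univ_three, η, Fin.reduceEq, reduceIte]
    norm_num
    simp only [z1, z2, e10, e20, e21, f10, f20, f21]
    ring
  have hY10 : Ymix X q 1 0 = (X 0 1 0 1)*(q 0)*(q 1) + (X 0 1 0 2)*(q 0)*(q 2) + (X 1 2 0 1)*(q 1)*(q 2) + (X 1 2 0 2)*(q 2)^2 := by
    simp only [Ymix, Ymap, raise4_diag, Fin.sum_univ_three, η, Fin.reduceEq, reduceIte]
    norm_num
    simp only [z1, z2, e10, e20, e21, f10, f20, f21]
    ring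
  have hY11 : Ymix X q 1 1 = (X 0 1 0 1)*(q 0)^2 + (X 0 1 1 2)*(q 0)*(q 2) + (X 1 2 0 1)*(q 0)*(q 2) + (X 1 2 1 2)*(q 2)^2 := by
    simp only [Ymix, Ymap, raise4_diag, Fin.sum_univ_three, η, Fin.reduceEq, reduceIte]
    norm_num
    simp only [z1, z2, e10, e20, e21, f10, f20, f21]
    ring
  have hY12 : Ymix X q 1 2 = (X 0 1 0 2)*(q 0)^2 - (X 0 1 1 2)*(q 0)*(q 1) + (X 1 2 0 2)*(q 0)*(q 2) - (X 1 2 1 2)*(q 1)*(q 2) := by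
    simp only [Ymix, Ymap, raise4_diag, Fin.sum_univ_three, η, Fin.reduceEq, reduceIte]
    norm_num
    simp only [z1, z2, e10, e20, e21, f10, f20, f21]
    ring
  have hY20 : Ymix X q 2 0 = (X 0 2 0 1)*(q 0)*(q 1) + (X 0 2 0 2)*(q 0)*(q 2) - (X 1 2 0 1)*(q 1)^2 - (X 1 2 0 2)*(q 1)*(q 2) := by
    simp only [Ymix, Ymap, raise4_diag, Fin.sum_univ_three, η, Fin.reduceEq, reduceIte]
    norm_num
    simp only [z1, z2, e10, e20, e21, f10, f20, f21]
    ring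
  have hY21 : Ymix X q 2 1 = (X 0 2 0 1)*(q 0)^2 + (X 0 2 1 2)*(q 0)*(q 2) - (X 1 2 0 1)*(q 0)*(q 1) - (X 1 2 1 2)*(q 1)*(q 2) := by
    simp only [Ymix, Ymap, raise4_diag, Fin.sum_univ_three, η, Fin.reduceEq, reduceIte]
    norm_num
    simp only [z1, z2, e10, e20, e21, f10, f20, f21]
    ring
  have hY22 : Ymix X q 2 2 = (X 0 2 0 2)*(q 0)^2 - (X 0 2 1 2)*(q 0)*(q 1) - (X 1 2 0 2)*(q 0)*(q 1) + (X 1 2 1 2)*(q 1)^2 := by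
    simp only [Ymix, Ymap, raise4_diag, Fin.sum_univ_three, η, Fin.reduceEq, reduceIte]
    norm_num
    simp only [z1, z2, e10, e20, e21, f10, f20, f21]
    ring
  have hD00 : Dten X 0 0 = -2*(X 0 1 0 1)*(X 0 2 0 2) + 2*(X 0 1 0 2)*(X 0 2 0 1) := by
    simp only [Dten, raise1of3, raise12of3, Fin.sum_univ_three, hrd0, hrd1, hrd2,
      hld0, hld1, hld2, η, Fin.reduceEq, reduceIte]
    norm_num
    simp only [z1, z2, e10, e20, e21, f10, f20, f21]
    ring
  have hD01 : Dten X 0 1 = -2*(X 0 1 0 1)*(X 0 2 1 2) + 2*(X 0 1 1 2)*(X 0 2 0 1) := by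
    simp only [Dten, raise1of3, raise12of3, Fin.sum_univ_three, hrd0, hrd1, hrd2,
      hld0, hld1, hld2, η, Fin.reduceEq, reduceIte]
    norm_num
    simp only [z1, z2, e10, e20, e21, f10, f20, f21]
    ring
  have hD02 : Dten X 0 2 = -2*(X 0 1 0 2)*(X 0 2 1 2) + 2*(X 0 1 1 2)*(X 0 2 0 2) := by
    simp only [Dten, raise1of3, raise12of3, Fin.sum_univ_three, hrd0, hrd1, hrd2,
      hld0, hld1, hld2, η, Fin.reduceEq, reduceIte]
    norm_num
    simp only [z1, z2, e10, e20, e21, f10, f20, f21]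
    ring
  have hD10 : Dten X 1 0 = 2*(X 0 1 0 1)*(X 1 2 0 2) - 2*(X 0 1 0 2)*(X 1 2 0 1) := by
    simp only [Dten, raise1of3, raise12of3, Fin.sum_univ_three, hrd0, hrd1, hrd2,
      hld0, hld1, hld2, η, Fin.reduceEq, reduceIte]
    norm_num
    simp only [z1, z2, e10, e20, e21, f10, f20, f21]
    ring
  have hD11 : Dten X 1 1 = 2*(X 0 1 0 1)*(X 1 2 1 2) - 2*(X 0 1 1 2)*(X 1 2 0 1) := by
    simp only [Dten, raise1of3, raise12of3, Fin.sum_univ_three, hrd0, hrd1, hrd2,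
      hld0, hld1, hld2, η, Fin.reduceEq, reduceIte]
    norm_num
    simp only [z1, z2, e10, e20, e21, f10, f20, f21]
    ring
  have hD12 : Dten X 1 2 = 2*(X 0 1 0 2)*(X 1 2 1 2) - 2*(X 0 1 1 2)*(X 1 2 0 2) := by
    simp only [Dten, raise1of3, raise12of3, Fin.sum_univ_three, hrd0, hrd1, hrd2,
      hld0, hld1, hld2, η, Fin.reduceEq, reduceIte]
    norm_num
    simp only [z1, z2, e10, e20, e21, f10, f20, f21]
    ring
  have hD20 : Dten X 2 0 = 2*(X 0 2 0 1)*(X 1 2 0 2) - 2*(X 0 2 0 2)*(X 1 2 0 1) := by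
    simp only [Dten, raise1of3, raise12of3, Fin.sum_univ_three, hrd0, hrd1, hrd2,
      hld0, hld1, hld2, η, Fin.reduceEq, reduceIte]
    norm_num
    simp only [z1, z2, e10, e20, e21, f10, f20, f21]
    ring
  have hD21 : Dten X 2 1 = 2*(X 0 2 0 1)*(X 1 2 1 2) - 2*(X 0 2 1 2)*(X 1 2 0 1) := by
    simp only [Dten, raise1of3, raise12of3, Fin.sum_univ_three, hrd0, hrd1, hrd2,
      hld0, hld1, hld2, η, Fin.reduceEq, reduceIte]
    norm_num
    simp only [z1, z2, e10, e20, e21, f10, f20, f21]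
    ring
  have hD22 : Dten X 2 2 = 2*(X 0 2 0 2)*(X 1 2 1 2) - 2*(X 0 2 1 2)*(X 1 2 0 2) := by
    simp only [Dten, raise1of3, raise12of3, Fin.sum_univ_three, hrd0, hrd1, hrd2,
      hld0, hld1, hld2, η, Fin.reduceEq, reduceIte]
    norm_num
    simp only [z1, z2, e10, e20, e21, f10, f20, f21]
    ring
  show _ = (∑ k, ∑ l, η k l * q k * q l) *
      (∑ i, ∑ j, Dten X i j * q i * (∑ j', η j j' * q j'))
  simp only [Fin.sum_univ_three, η, Fin.reduceEq, reduceIte]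
  norm_num
  simp only [hY00, hY01, hY02, hY10, hY11, hY12, hY20, hY21, hY22, hD00, hD01, hD02, hD10, hD11, hD12, hD20, hD21, hD22]
  ring
end
end

section
/- Let X be a constitutive tensor on a 3-dimensional Minkowski space. Then for all indices: X^{k i₂ l i₁} X_{l j₂ k j₁} = (⋆X⋆)^{i₁i₂} (⋆X⋆)_{j₁j₂} − (⋆X⋆)^{i₁k} (⋆X⋆)_{k j₂} δ^{i₂}{}_{j₁} − ½ X^{i₂}{}_{klm} X^{lmk}{}_{j₁} δ^{i₁}{}_{j₂}, where all indices are raised and lowered with η and repeated indices are summed. -/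
open scoped BigOperators

noncomputable section

lemma etaV00 : η 0 0 = (-1:ℝ) := by norm_num [η, Fin.ext_iff]
lemma etaV01 : η 0 1 = (0:ℝ) := by norm_num [η, Fin.ext_iff]
lemma etaV02 : η 0 2 = (0:ℝ) := by norm_num [η, Fin.ext_iff]
lemma etaV10 : η 1 0 = (0:ℝ) := by norm_num [η, Fin.ext_iff]
lemma etaV11 : η 1 1 = (1:ℝ) := by norm_num [η, Fin.ext_iff]
lemma etaV12 : η 1 2 = (0:ℝ) := by norm_num [η, Fin.ext_iff]
lemma etaV20 : η 2 0 = (0:ℝ) := by norm_num [η, Fin.ext_iff]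
lemma etaV21 : η 2 1 = (0:ℝ) := by norm_num [η, Fin.ext_iff]
lemma etaV22 : η 2 2 = (1:ℝ) := by norm_num [η, Fin.ext_iff]
lemma emV000 : εMix 0 0 0 = (0:ℝ) := by simp only [εMix, εLow, η, Fin.sum_univ_three, Fin.isValue, Fin.reduceEq, if_true, if_false]; norm_num
lemma emV001 : εMix 0 0 1 = (0:ℝ) := by simp only [εMix, εLow, η, Fin.sum_univ_three, Fin.isValue, Fin.reduceEq, if_true, if_false]; norm_num
lemma emV002 : εMix 0 0 2 = (0:ℝ) := by norm_num [εMix, εLow, η, Fin.sum_univ_three, Fin.ext_iff]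
lemma emV010 : εMix 0 1 0 = (0:ℝ) := by simp only [εMix, εLow, η, Fin.sum_univ_three, Fin.isValue, Fin.reduceEq, if_true, if_false]; norm_num
lemma emV011 : εMix 0 1 1 = (0:ℝ) := by simp only [εMix, εLow, η, Fin.sum_univ_three, Fin.isValue, Fin.reduceEq, if_true, if_false]; norm_num
lemma emV012 : εMix 0 1 2 = (-1:ℝ) := by norm_num [εMix, εLow, η, Fin.sum_univ_three, Fin.ext_iff]
lemma emV020 : εMix 0 2 0 = (0:ℝ) := by simp only [εMix, εLow, η, Fin.sum_univ_three, Fin.isValue, Fin.reduceEq, if_true, if_false]; norm_num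
lemma emV021 : εMix 0 2 1 = (1:ℝ) := by simp only [εMix, εLow, η, Fin.sum_univ_three, Fin.isValue, Fin.reduceEq, if_true, if_false]; norm_num
lemma emV022 : εMix 0 2 2 = (0:ℝ) := by norm_num [εMix, εLow, η, Fin.sum_univ_three, Fin.ext_iff]
lemma emV100 : εMix 1 0 0 = (0:ℝ) := by simp only [εMix, εLow, η, Fin.sum_univ_three, Fin.isValue, Fin.reduceEq, if_true, if_false]; norm_num
lemma emV101 : εMix 1 0 1 = (0:ℝ) := by simp only [εMix, εLow, η, Fin.sum_univ_three, Fin.isValue, Fin.reduceEq, if_true, if_false]; norm_num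
lemma emV102 : εMix 1 0 2 = (1:ℝ) := by norm_num [εMix, εLow, η, Fin.sum_univ_three, Fin.ext_iff]
lemma emV110 : εMix 1 1 0 = (0:ℝ) := by simp only [εMix, εLow, η, Fin.sum_univ_three, Fin.isValue, Fin.reduceEq, if_true, if_false]; norm_num
lemma emV111 : εMix 1 1 1 = (0:ℝ) := by simp only [εMix, εLow, η, Fin.sum_univ_three, Fin.isValue, Fin.reduceEq, if_true, if_false]; norm_num
lemma emV112 : εMix 1 1 2 = (0:ℝ) := by norm_num [εMix, εLow, η, Fin.sum_univ_three, Fin.ext_iff]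
lemma emV120 : εMix 1 2 0 = (1:ℝ) := by simp only [εMix, εLow, η, Fin.sum_univ_three, Fin.isValue, Fin.reduceEq, if_true, if_false]; norm_num
lemma emV121 : εMix 1 2 1 = (0:ℝ) := by simp only [εMix, εLow, η, Fin.sum_univ_three, Fin.isValue, Fin.reduceEq, if_true, if_false]; norm_num
lemma emV122 : εMix 1 2 2 = (0:ℝ) := by norm_num [εMix, εLow, η, Fin.sum_univ_three, Fin.ext_iff]
lemma emV200 : εMix 2 0 0 = (0:ℝ) := by simp only [εMix, εLow, η, Fin.sum_univ_three, Fin.isValue, Fin.reduceEq, if_true, if_false]; norm_num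
lemma emV201 : εMix 2 0 1 = (-1:ℝ) := by simp only [εMix, εLow, η, Fin.sum_univ_three, Fin.isValue, Fin.reduceEq, if_true, if_false]; norm_num
lemma emV202 : εMix 2 0 2 = (0:ℝ) := by norm_num [εMix, εLow, η, Fin.sum_univ_three, Fin.ext_iff]
lemma emV210 : εMix 2 1 0 = (-1:ℝ) := by simp only [εMix, εLow, η, Fin.sum_univ_three, Fin.isValue, Fin.reduceEq, if_true, if_false]; norm_num
lemma emV211 : εMix 2 1 1 = (0:ℝ) := by simp only [εMix, εLow, η, Fin.sum_univ_three, Fin.isValue, Fin.reduceEq, if_true, if_false]; norm_num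
lemma emV212 : εMix 2 1 2 = (0:ℝ) := by norm_num [εMix, εLow, η, Fin.sum_univ_three, Fin.ext_iff]
lemma emV220 : εMix 2 2 0 = (0:ℝ) := by simp only [εMix, εLow, η, Fin.sum_univ_three, Fin.isValue, Fin.reduceEq, if_true, if_false]; norm_num
lemma emV221 : εMix 2 2 1 = (0:ℝ) := by simp only [εMix, εLow, η, Fin.sum_univ_three, Fin.isValue, Fin.reduceEq, if_true, if_false]; norm_num
lemma emV222 : εMix 2 2 2 = (0:ℝ) := by norm_num [εMix, εLow, η, Fin.sum_univ_three, Fin.ext_iff]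
-- NAMES: etaV00, etaV01, etaV02, etaV10, etaV11, etaV12, etaV20, etaV21, etaV22, emV000, emV001, emV002, emV010, emV011, emV012, emV020, emV021, emV022, emV100, emV101, emV102, emV110, emV111, emV112, emV120, emV121, emV122, emV200, emV201, emV202, emV210, emV211, emV212, emV220, emV221, emV222

set_option maxHeartbeats 12000000 in
/-- X^{k i₂ l i₁} X_{l j₂ k j₁}
  = (⋆X⋆)^{i₁i₂} (⋆X⋆)_{j₁j₂} − (⋆X⋆)^{i₁k} (⋆X⋆)_{k j₂} δ^{i₂}{}_{j₁}
    − ½ X^{i₂}{}_{klm} X^{lmk}{}_{j₁} δ^{i₁}{}_{j₂}. -/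
theorem double_contraction_doubleDual_identity
    (X : Fin 3 → Fin 3 → Fin 3 → Fin 3 → ℝ) (hX : IsConstitutive X)
    (i1 i2 j1 j2 : Fin 3) :
    (∑ k, ∑ l, raise1234of4 X k i2 l i1 * X l j2 k j1) =
      raise12of2 (doubleDual X) i1 i2 * doubleDual X j1 j2 -
        (∑ k, raise12of2 (doubleDual X) i1 k * doubleDual X k j2) *
          (if i2 = j1 then (1:ℝ) else 0) -
        (1/2) * (∑ k, ∑ l, ∑ m, raise1of4 X i2 k l m * raise123of4 X l m k j1) *
          (if i1 = j2 then (1:ℝ) else 0) := by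
  obtain ⟨h1, h2⟩ := hX
  have hz1 : ∀ a c d, X a a c d = 0 := fun a c d => by have := h1 a a c d; linarith
  have hz2 : ∀ a b c, X a b c c = 0 := fun a b c => by have := h2 a b c c; linarith
  have e1 : ∀ c d, X 1 0 c d = -X 0 1 c d := fun c d => h1 1 0 c d
  have e2 : ∀ c d, X 2 0 c d = -X 0 2 c d := fun c d => h1 2 0 c d
  have e3 : ∀ c d, X 2 1 c d = -X 1 2 c d := fun c d => h1 2 1 c d
  have f1 : ∀ a b, X a b 1 0 = -X a b 0 1 := fun a b => h2 a b 1 0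
  have f2 : ∀ a b, X a b 2 0 = -X a b 0 2 := fun a b => h2 a b 2 0
  have f3 : ∀ a b, X a b 2 1 = -X a b 1 2 := fun a b => h2 a b 2 1
  have ηsum : ∀ (a : Fin 3) (f : Fin 3 → ℝ), (∑ x, η a x * f x) = η a a * f a := by
    intro a f
    fin_cases a <;> (norm_num [η, Fin.sum_univ_three, Fin.ext_iff]; try rfl)
  have nest2 : ∀ (g : Fin 3 → Fin 3 → ℝ) (a b : Fin 3),
      (∑ x, ∑ y, η a x * η b y * g x y) = η a a * (η b b * g a b) := by
    intro g a b
    have h : (∑ x, ∑ y, η a x * η b y * g x y) = ∑ x, η a x * ∑ y, η b y * g x y := by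
      refine Finset.sum_congr rfl fun x _ => ?_
      rw [Finset.mul_sum]
      exact Finset.sum_congr rfl fun y _ => by ring
    rw [h]; simp only [ηsum]
  have nest3 : ∀ (g : Fin 3 → Fin 3 → Fin 3 → ℝ) (a b c : Fin 3),
      (∑ x, ∑ y, ∑ z, η a x * η b y * η c z * g x y z)
        = η a a * (η b b * (η c c * g a b c)) := by
    intro g a b c
    have h : (∑ x, ∑ y, ∑ z, η a x * η b y * η c z * g x y z)
        = ∑ x, η a x * ∑ y, ∑ z, η b y * η c z * g x y z := by
      refine Finset.sum_congr rfl fun x _ => ?_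
      rw [Finset.mul_sum]
      refine Finset.sum_congr rfl fun y _ => ?_
      rw [Finset.mul_sum]
      exact Finset.sum_congr rfl fun z _ => by ring
    rw [h]; simp only [nest2, ηsum]
  have nest4 : ∀ (g : Fin 3 → Fin 3 → Fin 3 → Fin 3 → ℝ) (a b c d : Fin 3),
      (∑ x, ∑ y, ∑ z, ∑ w, η a x * η b y * η c z * η d w * g x y z w)
        = η a a * (η b b * (η c c * (η d d * g a b c d))) := by
    intro g a b c d
    have h : (∑ x, ∑ y, ∑ z, ∑ w, η a x * η b y * η c z * η d w * g x y z w)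
        = ∑ x, η a x * ∑ y, ∑ z, ∑ w, η b y * η c z * η d w * g x y z w := by
      refine Finset.sum_congr rfl fun x _ => ?_
      rw [Finset.mul_sum]
      refine Finset.sum_congr rfl fun y _ => ?_
      rw [Finset.mul_sum]
      refine Finset.sum_congr rfl fun z _ => ?_
      rw [Finset.mul_sum]
      exact Finset.sum_congr rfl fun w _ => by ring
    rw [h]; simp only [nest3, ηsum]
  have r1 : ∀ a b c d, raise1of4 X a b c d = η a a * X a b c d := by
    intro a b c d; unfold raise1of4; exact ηsum a _
  have r123 : ∀ a b c d, raise123of4 X a b c d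
      = η a a * (η b b * (η c c * X a b c d)) := by
    intro a b c d; unfold raise123of4; exact nest3 (fun x y z => X x y z d) a b c
  have r4 : ∀ a b c d, raise1234of4 X a b c d
      = η a a * (η b b * (η c c * (η d d * X a b c d))) := by
    intro a b c d; unfold raise1234of4; exact nest4 X a b c d
  have rdd : ∀ a b, raise12of2 (doubleDual X) a b
      = η a a * (η b b * doubleDual X a b) := by
    intro a b; unfold raise12of2; exact nest2 (doubleDual X) a b
  have dd00 : doubleDual X 0 0 = X 1 2 1 2 := by
    simp only [doubleDual, Fin.sum_univ_three,
      etaV00,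
      etaV01,
      etaV02,
      etaV10,
      etaV11,
      etaV12,
      etaV20,
      etaV21,
      etaV22,
      emV000,
      emV001,
      emV002,
      emV010,
      emV011,
      emV012,
      emV020,
      emV021,
      emV022,
      emV100,
      emV101,
      emV102,
      emV110,
      emV111,
      emV112,
      emV120,
      emV121,
      emV122,
      emV200,
      emV201,
      emV202,
      emV210,
      emV211,
      emV212,
      emV220,
      emV221,
      emV222,
      mul_zero, zero_mul, mul_one, one_mul, mul_neg, neg_mul, neg_neg, add_zero, zero_add, neg_zero,
      hz1, hz2, e1, e2, e3, f1, f2, f3]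
    ring
  have dd01 : doubleDual X 0 1 = X 1 2 0 2 := by
    simp only [doubleDual, Fin.sum_univ_three,
      etaV00,
      etaV01,
      etaV02,
      etaV10,
      etaV11,
      etaV12,
      etaV20,
      etaV21,
      etaV22,
      emV000,
      emV001,
      emV002,
      emV010,
      emV011,
      emV012,
      emV020,
      emV021,
      emV022,
      emV100,
      emV101,
      emV102,
      emV110,
      emV111,
      emV112,
      emV120,
      emV121,
      emV122,
      emV200,
      emV201,
      emV202,
      emV210,
      emV211,
      emV212,
      emV220,
      emV221,
      emV222,
      mul_zero, zero_mul, mul_one, one_mul, mul_neg, neg_mul, neg_neg, add_zero, zero_add, neg_zero,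
      hz1, hz2, e1, e2, e3, f1, f2, f3]
    ring
  have dd02 : doubleDual X 0 2 = -X 1 2 0 1 := by
    simp only [doubleDual, Fin.sum_univ_three,
      etaV00,
      etaV01,
      etaV02,
      etaV10,
      etaV11,
      etaV12,
      etaV20,
      etaV21,
      etaV22,
      emV000,
      emV001,
      emV002,
      emV010,
      emV011,
      emV012,
      emV020,
      emV021,
      emV022,
      emV100,
      emV101,
      emV102,
      emV110,
      emV111,
      emV112,
      emV120,
      emV121,
      emV122,
      emV200,
      emV201,
      emV202,
      emV210,
      emV211,
      emV212,
      emV220,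
      emV221,
      emV222,
      mul_zero, zero_mul, mul_one, one_mul, mul_neg, neg_mul, neg_neg, add_zero, zero_add, neg_zero,
      hz1, hz2, e1, e2, e3, f1, f2, f3]
    ring
  have dd10 : doubleDual X 1 0 = X 0 2 1 2 := by
    simp only [doubleDual, Fin.sum_univ_three,
      etaV00,
      etaV01,
      etaV02,
      etaV10,
      etaV11,
      etaV12,
      etaV20,
      etaV21,
      etaV22,
      emV000,
      emV001,
      emV002,
      emV010,
      emV011,
      emV012,
      emV020,
      emV021,
      emV022,
      emV100,
      emV101,
      emV102,
      emV110,
      emV111,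
      emV112,
      emV120,
      emV121,
      emV122,
      emV200,
      emV201,
      emV202,
      emV210,
      emV211,
      emV212,
      emV220,
      emV221,
      emV222,
      mul_zero, zero_mul, mul_one, one_mul, mul_neg, neg_mul, neg_neg, add_zero, zero_add, neg_zero,
      hz1, hz2, e1, e2, e3, f1, f2, f3]
    ring
  have dd11 : doubleDual X 1 1 = X 0 2 0 2 := by
    simp only [doubleDual, Fin.sum_univ_three,
      etaV00,
      etaV01,
      etaV02,
      etaV10,
      etaV11,
      etaV12,
      etaV20,
      etaV21,
      etaV22,
      emV000,
      emV001,
      emV002,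
      emV010,
      emV011,
      emV012,
      emV020,
      emV021,
      emV022,
      emV100,
      emV101,
      emV102,
      emV110,
      emV111,
      emV112,
      emV120,
      emV121,
      emV122,
      emV200,
      emV201,
      emV202,
      emV210,
      emV211,
      emV212,
      emV220,
      emV221,
      emV222,
      mul_zero, zero_mul, mul_one, one_mul, mul_neg, neg_mul, neg_neg, add_zero, zero_add, neg_zero,
      hz1, hz2, e1, e2, e3, f1, f2, f3]
    ring
  have dd12 : doubleDual X 1 2 = -X 0 2 0 1 := by
    simp only [doubleDual, Fin.sum_univ_three,
      etaV00,
      etaV01,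
      etaV02,
      etaV10,
      etaV11,
      etaV12,
      etaV20,
      etaV21,
      etaV22,
      emV000,
      emV001,
      emV002,
      emV010,
      emV011,
      emV012,
      emV020,
      emV021,
      emV022,
      emV100,
      emV101,
      emV102,
      emV110,
      emV111,
      emV112,
      emV120,
      emV121,
      emV122,
      emV200,
      emV201,
      emV202,
      emV210,
      emV211,
      emV212,
      emV220,
      emV221,
      emV222,
      mul_zero, zero_mul, mul_one, one_mul, mul_neg, neg_mul, neg_neg, add_zero, zero_add, neg_zero,
      hz1, hz2, e1, e2, e3, f1, f2, f3]
    ring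
  have dd20 : doubleDual X 2 0 = -X 0 1 1 2 := by
    simp only [doubleDual, Fin.sum_univ_three,
      etaV00,
      etaV01,
      etaV02,
      etaV10,
      etaV11,
      etaV12,
      etaV20,
      etaV21,
      etaV22,
      emV000,
      emV001,
      emV002,
      emV010,
      emV011,
      emV012,
      emV020,
      emV021,
      emV022,
      emV100,
      emV101,
      emV102,
      emV110,
      emV111,
      emV112,
      emV120,
      emV121,
      emV122,
      emV200,
      emV201,
      emV202,
      emV210,
      emV211,
      emV212,
      emV220,
      emV221,
      emV222,
      mul_zero, zero_mul, mul_one, one_mul, mul_neg, neg_mul, neg_neg, add_zero, zero_add, neg_zero,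
      hz1, hz2, e1, e2, e3, f1, f2, f3]
    ring
  have dd21 : doubleDual X 2 1 = -X 0 1 0 2 := by
    simp only [doubleDual, Fin.sum_univ_three,
      etaV00,
      etaV01,
      etaV02,
      etaV10,
      etaV11,
      etaV12,
      etaV20,
      etaV21,
      etaV22,
      emV000,
      emV001,
      emV002,
      emV010,
      emV011,
      emV012,
      emV020,
      emV021,
      emV022,
      emV100,
      emV101,
      emV102,
      emV110,
      emV111,
      emV112,
      emV120,
      emV121,
      emV122,
      emV200,
      emV201,
      emV202,
      emV210,
      emV211,
      emV212,
      emV220,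
      emV221,
      emV222,
      mul_zero, zero_mul, mul_one, one_mul, mul_neg, neg_mul, neg_neg, add_zero, zero_add, neg_zero,
      hz1, hz2, e1, e2, e3, f1, f2, f3]
    ring
  have dd22 : doubleDual X 2 2 = X 0 1 0 1 := by
    simp only [doubleDual, Fin.sum_univ_three,
      etaV00,
      etaV01,
      etaV02,
      etaV10,
      etaV11,
      etaV12,
      etaV20,
      etaV21,
      etaV22,
      emV000,
      emV001,
      emV002,
      emV010,
      emV011,
      emV012,
      emV020,
      emV021,
      emV022,
      emV100,
      emV101,
      emV102,
      emV110,
      emV111,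
      emV112,
      emV120,
      emV121,
      emV122,
      emV200,
      emV201,
      emV202,
      emV210,
      emV211,
      emV212,
      emV220,
      emV221,
      emV222,
      mul_zero, zero_mul, mul_one, one_mul, mul_neg, neg_mul, neg_neg, add_zero, zero_add, neg_zero,
      hz1, hz2, e1, e2, e3, f1, f2, f3]
    ring
  have hi : ∀ v : Fin 3, v = 0 ∨ v = 1 ∨ v = 2 := by decide
  rcases hi i1 with rfl|rfl|rfl <;> rcases hi i2 with rfl|rfl|rfl <;>
    rcases hi j1 with rfl|rfl|rfl <;> rcases hi j2 with rfl|rfl|rfl <;>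
    (simp only [r1, r123, r4, rdd, Fin.sum_univ_three,
      dd00, dd01, dd02, dd10, dd11, dd12, dd20, dd21, dd22,
      etaV00,
      etaV01,
      etaV02,
      etaV10,
      etaV11,
      etaV12,
      etaV20,
      etaV21,
      etaV22,
      emV000,
      emV001,
      emV002,
      emV010,
      emV011,
      emV012,
      emV020,
      emV021,
      emV022,
      emV100,
      emV101,
      emV102,
      emV110,
      emV111,
      emV112,
      emV120,
      emV121,
      emV122,
      emV200,
      emV201,
      emV202,
      emV210,
      emV211,
      emV212,
      emV220,
      emV221,
      emV222,
      hz1, hz2, e1, e2, e3, f1, f2, f3,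
      mul_zero, zero_mul, mul_one, one_mul, mul_neg, neg_mul, neg_neg, add_zero, zero_add, neg_zero]
     norm_num [Fin.ext_iff]
     try ring)
end
end

section
/- Let X be a constitutive tensor on a 3-dimensional Minkowski space and for a covector q define Y^{ab}(q) = X^{ambn} q_m q_n. Then Y^{k}{}_{l}(q) Y^{l}{}_{k}(q) − (Y^{k}{}_{k}(q))^2 = −(η^{kl} q_k q_l) · ( X^{i}{}_{k} X^{k}{}_{j} + ½ X^{i}{}_{klm} X^{lmk}{}_{j} ) q_i q^j, where X^{i}{}_{j} = X^{ik}{}_{jk}, all indices are raised and lowered with η, and repeated indices are summed. -/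
open scoped BigOperators

noncomputable section

set_option maxHeartbeats 1000000 in
/-- Y^{k}{}_{l} Y^{l}{}_{k} − (Y^{k}{}_{k})²
  = −(η^{kl} q_k q_l) · ( X^{i}{}_{k} X^{k}{}_{j} + ½ X^{i}{}_{klm} X^{lmk}{}_{j} ) q_i q^j. -/
theorem fresnel_quartic_trace_form
    (X : Fin 3 → Fin 3 → Fin 3 → Fin 3 → ℝ) (hX : IsConstitutive X)
    (q : Fin 3 → ℝ) :
    (∑ k, ∑ l, Ymix X q k l * Ymix X q l k) - (∑ k, Ymix X q k k) ^ 2 =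
      -(∑ k, ∑ l, η k l * q k * q l) *
        (∑ i, ∑ j,
          ((∑ k, mixTrace X i k * mixTrace X k j) +
            (1/2) * ∑ k, ∑ l, ∑ m, raise1of4 X i k l m * raise123of4 X l m k j) *
            q i * (∑ j', η j j' * q j')) := by
  obtain ⟨hA, hB⟩ := hX
  have z1 : ∀ a c d, X a a c d = 0 := fun a c d => by have := hA a a c d; linarith
  have z2 : ∀ a b c, X a b c c = 0 := fun a b c => by have := hB a b c c; linarith
  have r10 : ∀ c d, X 1 0 c d = -X 0 1 c d := fun c d => hA 1 0 c d
  have r20 : ∀ c d, X 2 0 c d = -X 0 2 c d := fun c d => hA 2 0 c d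
  have r21 : ∀ c d, X 2 1 c d = -X 1 2 c d := fun c d => hA 2 1 c d
  have s10 : ∀ a b, X a b 1 0 = -X a b 0 1 := fun a b => hB a b 1 0
  have s20 : ∀ a b, X a b 2 0 = -X a b 0 2 := fun a b => hB a b 2 0
  have s21 : ∀ a b, X a b 2 1 = -X a b 1 2 := fun a b => hB a b 2 1
  have e00 : η 0 0 = -1 := by norm_num [η, Fin.ext_iff]
  have e01 : η 0 1 = 0 := by norm_num [η, Fin.ext_iff]
  have e02 : η 0 2 = 0 := by norm_num [η, Fin.ext_iff]
  have e10 : η 1 0 = 0 := by norm_num [η, Fin.ext_iff]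
  have e11 : η 1 1 = 1 := by norm_num [η, Fin.ext_iff]
  have e12 : η 1 2 = 0 := by norm_num [η, Fin.ext_iff]
  have e20 : η 2 0 = 0 := by norm_num [η, Fin.ext_iff]
  have e21 : η 2 1 = 0 := by norm_num [η, Fin.ext_iff]
  have e22 : η 2 2 = 1 := by norm_num [η, Fin.ext_iff]
  have hr1 : ∀ a b c d, raise1of4 X a b c d = η a a * X a b c d := by
    intro a b c d
    fin_cases a <;> simp [raise1of4, Fin.sum_univ_three, e00, e01, e02, e10, e11, e12, e20, e21, e22, zero_mul, mul_zero, zero_add, add_zero, one_mul, mul_one, neg_mul, mul_neg, neg_neg]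
  have hr123 : ∀ a b c d, raise123of4 X a b c d = η a a * η b b * η c c * X a b c d := by
    intro a b c d
    fin_cases a <;> fin_cases b <;> fin_cases c <;>
      simp [raise123of4, Fin.sum_univ_three, e00, e01, e02, e10, e11, e12, e20, e21, e22, zero_mul, mul_zero, zero_add, add_zero, one_mul, mul_one, neg_mul, mul_neg, neg_neg] <;> ring
  have hY00 : Ymix X q 0 0 = (-1) * X 0 1 0 1 * q 1 * q 1 + (-1) * X 0 1 0 2 * q 1 * q 2 + (-1) * X 0 2 0 1 * q 1 * q 2 + (-1) * X 0 2 0 2 * q 2 * q 2 := by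
    simp only [Ymix, Ymap, raise1234of4, Fin.sum_univ_three, e00, e01, e02, e10, e11, e12, e20, e21, e22, zero_mul, mul_zero, zero_add, add_zero, one_mul, mul_one, neg_mul, mul_neg, neg_neg]
    simp only [z1, z2, r10, r20, r21, s10, s20, s21]
    ring
  have hY01 : Ymix X q 0 1 = (-1) * X 0 1 0 1 * q 0 * q 1 + (-1) * X 0 1 1 2 * q 1 * q 2 + (-1) * X 0 2 0 1 * q 0 * q 2 + (-1) * X 0 2 1 2 * q 2 * q 2 := by
    simp only [Ymix, Ymap, raise1234of4, Fin.sum_univ_three, e00, e01, e02, e10, e11, e12, e20, e21, e22, zero_mul, mul_zero, zero_add, add_zero, one_mul, mul_one, neg_mul, mul_neg, neg_neg]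
    simp only [z1, z2, r10, r20, r21, s10, s20, s21]
    ring
  have hY02 : Ymix X q 0 2 = (-1) * X 0 1 0 2 * q 0 * q 1 + X 0 1 1 2 * q 1 * q 1 + (-1) * X 0 2 0 2 * q 0 * q 2 + X 0 2 1 2 * q 1 * q 2 := by
    simp only [Ymix, Ymap, raise1234of4, Fin.sum_univ_three, e00, e01, e02, e10, e11, e12, e20, e21, e22, zero_mul, mul_zero, zero_add, add_zero, one_mul, mul_one, neg_mul, mul_neg, neg_neg]
    simp only [z1, z2, r10, r20, r21, s10, s20, s21]
    ring
  have hY10 : Ymix X q 1 0 = X 0 1 0 1 * q 0 * q 1 + X 0 1 0 2 * q 0 * q 2 + X 1 2 0 1 * q 1 * q 2 + X 1 2 0 2 * q 2 * q 2 := by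
    simp only [Ymix, Ymap, raise1234of4, Fin.sum_univ_three, e00, e01, e02, e10, e11, e12, e20, e21, e22, zero_mul, mul_zero, zero_add, add_zero, one_mul, mul_one, neg_mul, mul_neg, neg_neg]
    simp only [z1, z2, r10, r20, r21, s10, s20, s21]
    ring
  have hY11 : Ymix X q 1 1 = X 0 1 0 1 * q 0 * q 0 + X 0 1 1 2 * q 0 * q 2 + X 1 2 0 1 * q 0 * q 2 + X 1 2 1 2 * q 2 * q 2 := by
    simp only [Ymix, Ymap, raise1234of4, Fin.sum_univ_three, e00, e01, e02, e10, e11, e12, e20, e21, e22, zero_mul, mul_zero, zero_add, add_zero, one_mul, mul_one, neg_mul, mul_neg, neg_neg]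
    simp only [z1, z2, r10, r20, r21, s10, s20, s21]
    ring
  have hY12 : Ymix X q 1 2 = X 0 1 0 2 * q 0 * q 0 + (-1) * X 0 1 1 2 * q 0 * q 1 + X 1 2 0 2 * q 0 * q 2 + (-1) * X 1 2 1 2 * q 1 * q 2 := by
    simp only [Ymix, Ymap, raise1234of4, Fin.sum_univ_three, e00, e01, e02, e10, e11, e12, e20, e21, e22, zero_mul, mul_zero, zero_add, add_zero, one_mul, mul_one, neg_mul, mul_neg, neg_neg]
    simp only [z1, z2, r10, r20, r21, s10, s20, s21]
    ring
  have hY20 : Ymix X q 2 0 = X 0 2 0 1 * q 0 * q 1 + X 0 2 0 2 * q 0 * q 2 + (-1) * X 1 2 0 1 * q 1 * q 1 + (-1) * X 1 2 0 2 * q 1 * q 2 := by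
    simp only [Ymix, Ymap, raise1234of4, Fin.sum_univ_three, e00, e01, e02, e10, e11, e12, e20, e21, e22, zero_mul, mul_zero, zero_add, add_zero, one_mul, mul_one, neg_mul, mul_neg, neg_neg]
    simp only [z1, z2, r10, r20, r21, s10, s20, s21]
    ring
  have hY21 : Ymix X q 2 1 = X 0 2 0 1 * q 0 * q 0 + X 0 2 1 2 * q 0 * q 2 + (-1) * X 1 2 0 1 * q 0 * q 1 + (-1) * X 1 2 1 2 * q 1 * q 2 := by
    simp only [Ymix, Ymap, raise1234of4, Fin.sum_univ_three, e00, e01, e02, e10, e11, e12, e20, e21, e22, zero_mul, mul_zero, zero_add, add_zero, one_mul, mul_one, neg_mul, mul_neg, neg_neg]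
    simp only [z1, z2, r10, r20, r21, s10, s20, s21]
    ring
  have hY22 : Ymix X q 2 2 = X 0 2 0 2 * q 0 * q 0 + (-1) * X 0 2 1 2 * q 0 * q 1 + (-1) * X 1 2 0 2 * q 0 * q 1 + X 1 2 1 2 * q 1 * q 1 := by
    simp only [Ymix, Ymap, raise1234of4, Fin.sum_univ_three, e00, e01, e02, e10, e11, e12, e20, e21, e22, zero_mul, mul_zero, zero_add, add_zero, one_mul, mul_one, neg_mul, mul_neg, neg_neg]
    simp only [z1, z2, r10, r20, r21, s10, s20, s21]
    ring
  have hT00 : mixTrace X 0 0 = (-1) * X 0 1 0 1 + (-1) * X 0 2 0 2 := by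
    simp only [mixTrace, raise12of4, Fin.sum_univ_three, e00, e01, e02, e10, e11, e12, e20, e21, e22, zero_mul, mul_zero, zero_add, add_zero, one_mul, mul_one, neg_mul, mul_neg, neg_neg]
    simp only [z1, z2, r10, r20, r21, s10, s20, s21]
    ring
  have hT01 : mixTrace X 0 1 = (-1) * X 0 2 1 2 := by
    simp only [mixTrace, raise12of4, Fin.sum_univ_three, e00, e01, e02, e10, e11, e12, e20, e21, e22, zero_mul, mul_zero, zero_add, add_zero, one_mul, mul_one, neg_mul, mul_neg, neg_neg]
    simp only [z1, z2, r10, r20, r21, s10, s20, s21]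
    ring
  have hT02 : mixTrace X 0 2 = X 0 1 1 2 := by
    simp only [mixTrace, raise12of4, Fin.sum_univ_three, e00, e01, e02, e10, e11, e12, e20, e21, e22, zero_mul, mul_zero, zero_add, add_zero, one_mul, mul_one, neg_mul, mul_neg, neg_neg]
    simp only [z1, z2, r10, r20, r21, s10, s20, s21]
    ring
  have hT10 : mixTrace X 1 0 = X 1 2 0 2 := by
    simp only [mixTrace, raise12of4, Fin.sum_univ_three, e00, e01, e02, e10, e11, e12, e20, e21, e22, zero_mul, mul_zero, zero_add, add_zero, one_mul, mul_one, neg_mul, mul_neg, neg_neg]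
    simp only [z1, z2, r10, r20, r21, s10, s20, s21]
    ring
  have hT11 : mixTrace X 1 1 = (-1) * X 0 1 0 1 + X 1 2 1 2 := by
    simp only [mixTrace, raise12of4, Fin.sum_univ_three, e00, e01, e02, e10, e11, e12, e20, e21, e22, zero_mul, mul_zero, zero_add, add_zero, one_mul, mul_one, neg_mul, mul_neg, neg_neg]
    simp only [z1, z2, r10, r20, r21, s10, s20, s21]
    ring
  have hT12 : mixTrace X 1 2 = (-1) * X 0 1 0 2 := by
    simp only [mixTrace, raise12of4, Fin.sum_univ_three, e00, e01, e02, e10, e11, e12, e20, e21, e22, zero_mul, mul_zero, zero_add, add_zero, one_mul, mul_one, neg_mul, mul_neg, neg_neg]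
    simp only [z1, z2, r10, r20, r21, s10, s20, s21]
    ring
  have hT20 : mixTrace X 2 0 = (-1) * X 1 2 0 1 := by
    simp only [mixTrace, raise12of4, Fin.sum_univ_three, e00, e01, e02, e10, e11, e12, e20, e21, e22, zero_mul, mul_zero, zero_add, add_zero, one_mul, mul_one, neg_mul, mul_neg, neg_neg]
    simp only [z1, z2, r10, r20, r21, s10, s20, s21]
    ring
  have hT21 : mixTrace X 2 1 = (-1) * X 0 2 0 1 := by
    simp only [mixTrace, raise12of4, Fin.sum_univ_three, e00, e01, e02, e10, e11, e12, e20, e21, e22, zero_mul, mul_zero, zero_add, add_zero, one_mul, mul_one, neg_mul, mul_neg, neg_neg]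
    simp only [z1, z2, r10, r20, r21, s10, s20, s21]
    ring
  have hT22 : mixTrace X 2 2 = (-1) * X 0 2 0 2 + X 1 2 1 2 := by
    simp only [mixTrace, raise12of4, Fin.sum_univ_three, e00, e01, e02, e10, e11, e12, e20, e21, e22, zero_mul, mul_zero, zero_add, add_zero, one_mul, mul_one, neg_mul, mul_neg, neg_neg]
    simp only [z1, z2, r10, r20, r21, s10, s20, s21]
    ring

  simp only [Fin.sum_univ_three, hr1, hr123]
  simp only [hY00, hY01, hY02, hY10, hY11, hY12, hY20, hY21, hY22,
    hT00, hT01, hT02, hT10, hT11, hT12, hT20, hT21, hT22,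
    e00, e01, e02, e10, e11, e12, e20, e21, e22, zero_mul, mul_zero, zero_add, add_zero, one_mul, mul_one, neg_mul, mul_neg, neg_neg]
  simp only [z1, z2, r10, r20, r21, s10, s20, s21]
  ring
end
end

section
/- Let X be a constitutive tensor on a 3-dimensional Minkowski space, for a covector q define Y^{ab}(q) = X^{ambn} q_m q_n, and define the effective optical metric ĝ^{ab} = −½ (⋆X)^{kl(a} (X⋆)^{b)}{}_{kl}. If q is a nonzero covector with η^{ab} q_a q_b ≠ 0 such that the 3×3 matrix Y^{a}{}_{b}(q) has rank at most 1, then q lies on the null cone of the effective optical metric: ĝ^{ab} q_a q_b = 0 (the dispersion relation). -/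
open scoped BigOperators

noncomputable section

/-- The effective optical metric
ĝ^{ab} = −½ (⋆X)^{kl(a} (X⋆)^{b)}{}_{kl}
       = −¼ [ (⋆X)^{kla} (X⋆)^{b}{}_{kl} + (⋆X)^{klb} (X⋆)^{a}{}_{kl} ]. -/
def ghat (X : Fin 3 → Fin 3 → Fin 3 → Fin 3 → ℝ) (a b : Fin 3) : ℝ :=
  -(1/4) * ((∑ k, ∑ l, raise123of3 (leftDual X) k l a * raise1of3 (rightDual X) b k l)
    + (∑ k, ∑ l, raise123of3 (leftDual X) k l b * raise1of3 (rightDual X) a k l))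


/-- Sign factor for raising/lowering with the diagonal metric diag(−1,1,1). -/
def sg (a : Fin 3) : ℝ := if a = 0 then -1 else 1

lemma sg0 : sg 0 = -1 := rfl
lemma sg1 : sg 1 = 1 := rfl
lemma sg2 : sg 2 = 1 := rfl

lemma collapse (a : Fin 3) (f : Fin 3 → ℝ) :
    (∑ x, η a x * f x) = sg a * f a := by
  fin_cases a <;> simp [η, sg, Fin.sum_univ_three]

lemma minors_zero {M : Matrix (Fin 3) (Fin 3) ℝ} (h : M.rank ≤ 1)
    (i j k l : Fin 3) : M i k * M j l - M i l * M j k = 0 := by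
  rw [Matrix.rank] at h
  obtain ⟨⟨v, hvmem⟩, hv⟩ := finrank_le_one_iff.mp h
  have col : ∀ c : Fin 3, ∃ r : ℝ, ∀ i, M i c = r * v i := by
    intro c
    have hc : M.mulVec (Pi.single c 1) ∈ LinearMap.range M.mulVecLin :=
      ⟨Pi.single c 1, rfl⟩
    obtain ⟨r, hr⟩ := hv ⟨_, hc⟩
    refine ⟨r, fun i => ?_⟩
    have h2 := congrArg (fun w : LinearMap.range M.mulVecLin => (w : Fin 3 → ℝ) i) hr
    simp only [Submodule.coe_smul] at h2
    have h3 : (r • v) i = M.mulVec (Pi.single c 1) i := h2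
    simpa [Matrix.mulVec_single, mul_comm] using h3.symm
  obtain ⟨rk, hrk⟩ := col k
  obtain ⟨rl, hrl⟩ := col l
  rw [hrk, hrl, hrk, hrl]; ring

set_option maxHeartbeats 1000000 in
lemma raise1234of4_eq (X : Fin 3 → Fin 3 → Fin 3 → Fin 3 → ℝ) (a b c d : Fin 3) :
    raise1234of4 X a b c d = sg a * sg b * sg c * sg d * X a b c d := by
  fin_cases a <;> fin_cases b <;> fin_cases c <;> fin_cases d <;>
    simp [raise1234of4, η, sg, Fin.sum_univ_three]

lemma raise1of3_eq (T : Fin 3 → Fin 3 → Fin 3 → ℝ) (a b c : Fin 3) :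
    raise1of3 T a b c = sg a * T a b c := collapse a _

set_option maxHeartbeats 1000000 in
lemma raise123of3_eq (T : Fin 3 → Fin 3 → Fin 3 → ℝ) (a b c : Fin 3) :
    raise123of3 T a b c = sg a * sg b * sg c * T a b c := by
  fin_cases a <;> fin_cases b <;> fin_cases c <;>
    simp [raise123of3, η, sg, Fin.sum_univ_three]

lemma leftDual_eq0 (X : Fin 3 → Fin 3 → Fin 3 → Fin 3 → ℝ) (b c : Fin 3) :
    leftDual X 0 b c = (X 1 2 b c - X 2 1 b c) / 2 := by
  simp [leftDual, εMix, η, εLow, Fin.sum_univ_three]; ring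

lemma leftDual_eq1 (X : Fin 3 → Fin 3 → Fin 3 → Fin 3 → ℝ) (b c : Fin 3) :
    leftDual X 1 b c = (X 0 2 b c - X 2 0 b c) / 2 := by
  simp [leftDual, εMix, η, εLow, Fin.sum_univ_three]; ring

lemma leftDual_eq2 (X : Fin 3 → Fin 3 → Fin 3 → Fin 3 → ℝ) (b c : Fin 3) :
    leftDual X 2 b c = (X 1 0 b c - X 0 1 b c) / 2 := by
  simp [leftDual, εMix, η, εLow, Fin.sum_univ_three]; ring

lemma rightDual_eq0 (X : Fin 3 → Fin 3 → Fin 3 → Fin 3 → ℝ) (a b : Fin 3) :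
    rightDual X a b 0 = (X a b 1 2 - X a b 2 1) / 2 := by
  simp [rightDual, εMix, η, εLow, Fin.sum_univ_three]; ring

lemma rightDual_eq1 (X : Fin 3 → Fin 3 → Fin 3 → Fin 3 → ℝ) (a b : Fin 3) :
    rightDual X a b 1 = (X a b 0 2 - X a b 2 0) / 2 := by
  simp [rightDual, εMix, η, εLow, Fin.sum_univ_three]; ring

lemma rightDual_eq2 (X : Fin 3 → Fin 3 → Fin 3 → Fin 3 → ℝ) (a b : Fin 3) :
    rightDual X a b 2 = (X a b 1 0 - X a b 0 1) / 2 := by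
  simp [rightDual, εMix, η, εLow, Fin.sum_univ_three]; ring

lemma etav00 : η 0 0 = -1 := by norm_num [η, Fin.ext_iff]
lemma etav01 : η 0 1 = 0 := by norm_num [η, Fin.ext_iff]
lemma etav02 : η 0 2 = 0 := by norm_num [η, Fin.ext_iff]
lemma etav10 : η 1 0 = 0 := by norm_num [η, Fin.ext_iff]
lemma etav11 : η 1 1 = 1 := by norm_num [η, Fin.ext_iff]
lemma etav12 : η 1 2 = 0 := by norm_num [η, Fin.ext_iff]
lemma etav20 : η 2 0 = 0 := by norm_num [η, Fin.ext_iff]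
lemma etav21 : η 2 1 = 0 := by norm_num [η, Fin.ext_iff]
lemma etav22 : η 2 2 = 1 := by norm_num [η, Fin.ext_iff]

set_option maxRecDepth 100000 in
set_option maxHeartbeats 8000000 in

/-- dispersion relation: if q is a nonzero non-null covector such
that the matrix Y^{a}{}_{b}(q) = η_{bc} Y^{ac}(q) has rank at most 1, then q lies on
the null cone of the effective optical metric: ĝ^{ab} q_a q_b = 0. -/
theorem dispersion_relation
    (X : Fin 3 → Fin 3 → Fin 3 → Fin 3 → ℝ) (hX : IsConstitutive X)
    (q : Fin 3 → ℝ) (hq : q ≠ 0)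
    (hnull : (∑ a, ∑ b, η a b * q a * q b) ≠ 0)
    (hrank : Matrix.rank (Matrix.of fun a b => ∑ c, η b c * Ymap X q a c) ≤ 1) :
    (∑ a, ∑ b, ghat X a b * q a * q b) = 0 := by
  have m1 := minors_zero hrank 1 2 1 2
  have m2 := minors_zero hrank 0 2 0 2
  have m3 := minors_zero hrank 0 1 0 1
  obtain ⟨hA, hB⟩ := hX
  have e1 : ∀ c d, X 1 0 c d = -X 0 1 c d := fun c d => hA 1 0 c d
  have e2 : ∀ c d, X 2 0 c d = -X 0 2 c d := fun c d => hA 2 0 c d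
  have e3 : ∀ c d, X 2 1 c d = -X 1 2 c d := fun c d => hA 2 1 c d
  have z0 : ∀ c d, X 0 0 c d = 0 := fun c d => by have := hA 0 0 c d; linarith
  have z1 : ∀ c d, X 1 1 c d = 0 := fun c d => by have := hA 1 1 c d; linarith
  have z2 : ∀ c d, X 2 2 c d = 0 := fun c d => by have := hA 2 2 c d; linarith
  have f1 : ∀ a b, X a b 1 0 = -X a b 0 1 := fun a b => hB a b 1 0
  have f2 : ∀ a b, X a b 2 0 = -X a b 0 2 := fun a b => hB a b 2 0
  have f3 : ∀ a b, X a b 2 1 = -X a b 1 2 := fun a b => hB a b 2 1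
  have w0 : ∀ a b, X a b 0 0 = 0 := fun a b => by have := hB a b 0 0; linarith
  have w1 : ∀ a b, X a b 1 1 = 0 := fun a b => by have := hB a b 1 1; linarith
  have w2 : ∀ a b, X a b 2 2 = 0 := fun a b => by have := hB a b 2 2; linarith
  have key : (∑ a, ∑ b, η a b * q a * q b) * (∑ a, ∑ b, ghat X a b * q a * q b) = 0 := by
    simp only [Matrix.of_apply, Ymap, raise1234of4_eq, Fin.sum_univ_three,
      etav00, etav01, etav02, etav10, etav11, etav12, etav20, etav21, etav22, sg0, sg1, sg2] at m1 m2 m3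
    norm_num at m1 m2 m3
    simp only [e1, e2, e3, z0, z1, z2, f1, f2, f3, w0, w1, w2] at m1 m2 m3
    simp only [ghat, raise123of3_eq, raise1of3_eq, leftDual_eq0, leftDual_eq1, leftDual_eq2,
      rightDual_eq0, rightDual_eq1, rightDual_eq2, Fin.sum_univ_three, etav00, etav01, etav02, etav10, etav11, etav12, etav20, etav21, etav22, sg0, sg1, sg2]
    norm_num [-mul_eq_zero]
    simp only [e1, e2, e3, z0, z1, z2, f1, f2, f3, w0, w1, w2]
    linear_combination m1 + m2 + m3
  exact (mul_eq_zero.mp key).resolve_left hnull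
end
end

section
/- (Gordon metric in 2+1 dimensions) Let t be a unit timelike vector (η_{ab} t^a t^b = −1), let h^{ab} = η^{ab} + t^a t^b be the orthogonal projector, and let ε̃ and μ be real parameters with μ ≠ 0. For the isotropic medium whose constitutive tetrad is 𝔄^{ab} = ε̃ h^{ab}, 𝔅 = ℭ = 0, 𝔇 = 1/μ, the effective optical metric formula ĝ^{ab} = 𝔇 𝔄^{(ab)} + ½( 𝔄^{p}{}_{q} 𝔄^{q}{}_{p} − 𝔄^{p}{}_{p} 𝔄^{q}{}_{q} ) t^a t^b evaluates to ĝ^{ab} = (ε̃/μ) ( η^{ab} + (1 − μ ε̃) t^a t^b ); that is, up to the conformal factor ε̃/μ, the effective optical metric is the Gordon metric g^{ab} + (1 − μ ε̃) t^a t^b. -/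
open scoped BigOperators

noncomputable section

/-- The permittivity tensor (indices up) of an isotropic medium:
𝔄^{ab} = ε̃ h^{ab} with h^{ab} = η^{ab} + t^a t^b the orthogonal projector. -/
def isoAup (εt : ℝ) (t : Fin 3 → ℝ) (a b : Fin 3) : ℝ :=
  εt * (η a b + t a * t b)

/-- The mixed permittivity 𝔄^{p}{}_{q} = η_{qc} 𝔄^{pc}. -/
def isoAmix (εt : ℝ) (t : Fin 3 → ℝ) (p q : Fin 3) : ℝ :=
  ∑ c, η q c * isoAup εt t p c

/-- Gordon metric in 2+1 dimensions: for the isotropic medium with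
𝔄^{ab} = ε̃ h^{ab}, 𝔅 = ℭ = 0, 𝔇 = 1/μ, the effective optical metric
ĝ^{ab} = 𝔇 𝔄^{(ab)} + ½( 𝔄^{p}{}_{q} 𝔄^{q}{}_{p} − 𝔄^{p}{}_{p} 𝔄^{q}{}_{q} ) t^a t^b
equals (ε̃/μ)( η^{ab} + (1 − μ ε̃) t^a t^b ). -/
theorem gordon_metric_two_plus_one
    (t : Fin 3 → ℝ) (ht : (∑ a, ∑ b, η a b * t a * t b) = -1)
    (εt μ : ℝ) (hμ : μ ≠ 0) (a b : Fin 3) :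
    (1/μ) * ((1/2) * (isoAup εt t a b + isoAup εt t b a))
      + (1/2) * ((∑ p, ∑ q, isoAmix εt t p q * isoAmix εt t q p)
          - (∑ p, isoAmix εt t p p) * (∑ q, isoAmix εt t q q)) * t a * t b
      = (εt/μ) * (η a b + (1 - μ * εt) * t a * t b) := by
  have h1 : -(t 0 * t 0) + t 1 * t 1 + t 2 * t 2 = -1 := by
    simpa [η, Fin.sum_univ_three] using ht
  have hS : (∑ p, ∑ q, isoAmix εt t p q * isoAmix εt t q p)
      - (∑ p, isoAmix εt t p p) * (∑ q, isoAmix εt t q q) = -2 * εt^2 := by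
    simp only [isoAmix, isoAup, η, Fin.sum_univ_three]
    norm_num [Fin.ext_iff]
    linear_combination (-4 * εt^2) * h1
  have hsym : η b a = η a b := by
    unfold η
    rcases eq_or_ne a b with h | h
    · simp [h]
    · simp [h, h.symm]
  rw [hS]
  simp only [isoAup]
  rw [hsym]
  field_simp
  ring
end
end
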